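/- arXiv:1808.05097 — 2 statements merged into one kernel-verified Lean document; each statement's English description precedes it below -/
import Mathlib

section
/- (Kruskal's Tree Theorem) The homeomorphic embedding relation is a well-quasi-ordering on the set of ground terms over a finite signature: for every infinite sequence of terms t₁, t₂, …, there exist indices i < j with tᵢ ◁ tⱼ. -/
/-- Terms over a signature `σ`: finite rooted trees labeled by function symbols. -/
inductive Tm (σ : Type) : Type
  | node : σ → List (Tm σ) → Tm σ

/-- Homeomorphic embedding: Diving and Coupling rules. -/
inductive Emb {σ : Type} : Tm σ → Tm σ → Prop
  | dive {s t : Tm σ} {f : σ} {ts : List (Tm σ)} : t ∈ ts → Emb s t → Emb s (.node f ts)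
  | couple {f : σ} {ss ts : List (Tm σ)} : List.Forall₂ Emb ss ts → Emb (.node f ss) (.node f ts)

/-- Well-formed terms w.r.t. an arity function: every `f`-node has exactly `ar f` arguments. -/
inductive WF {σ : Type} (ar : σ → Nat) : Tm σ → Prop
  | node {f : σ} {ts : List (Tm σ)} : ts.length = ar f → (∀ t ∈ ts, WF ar t) → WF ar (.node f ts)

/-!
Nash-Williams' minimal bad sequence argument. If a bad sequence of well-formed terms existed, there
would be one that is minimal in term size at every position. The immediate subterms of its members
are then well-quasi-ordered, since a bad sequence of them could replace a tail of the minimal one.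
By Higman's lemma their argument lists are well-quasi-ordered under `SublistForall₂`, and since there
are finitely many root symbols, two members `i < j` have the same root and argument lists related by
`SublistForall₂`. Equal roots have equal arity, so this is a coupling, contradicting badness.
-/

namespace List
variable {α β γ : Type*} {R : α → β → Prop} {S : β → γ → Prop} {T : α → γ → Prop}

theorem Forall₂.exists_mem_right {l₁ : List α} {l₂ : List β} (h : Forall₂ R l₁ l₂) {a : α}
    (ha : a ∈ l₁) : ∃ b ∈ l₂, R a b := by
  induction h with
  | nil => cases ha
  | cons hab _ ih =>
    rcases mem_cons.1 ha with rfl | ha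
    · exact ⟨_, mem_cons_self, hab⟩
    · obtain ⟨b, hb, hab⟩ := ih ha
      exact ⟨b, mem_cons_of_mem _ hb, hab⟩

theorem Forall₂.trans_of_mem {l₁ : List α} {l₂ : List β} {l₃ : List γ}
    (H : ∀ a b c, c ∈ l₃ → R a b → S b c → T a c) (h₁ : Forall₂ R l₁ l₂) (h₂ : Forall₂ S l₂ l₃) :
    Forall₂ T l₁ l₃ := by
  induction h₂ generalizing l₁ with
  | nil => cases h₁; exact .nil
  | cons hbc _ ih =>
    cases h₁ with
    | cons hab h₁ =>
      exact .cons (H _ _ _ mem_cons_self hab hbc)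
        (ih (fun a b c hc => H a b c (mem_cons_of_mem _ hc)) h₁)

theorem SublistForall₂.forall₂_of_length_eq {l₁ : List α} {l₂ : List β}
    (h : SublistForall₂ R l₁ l₂) (hlen : l₁.length = l₂.length) : Forall₂ R l₁ l₂ := by
  obtain ⟨l, hl₁, hl⟩ := sublistForall₂_iff.1 h
  rwa [hl.eq_of_length (hl₁.length_eq ▸ hlen)] at hl₁

end List

namespace Set.PartiallyWellOrderedOn
variable {α : Type*} {r : α → α → Prop} {rk : α → ℕ} {s : Set α} {f : ℕ → α}

theorem of_isMinBadSeq (hbad : IsBadSeq r s f) (hmin : ∀ n, IsMinBadSeq r rk s n f)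
    {sub : α → α → Prop} (hs : ∀ x y, sub x y → y ∈ s → x ∈ s)
    (hrk : ∀ x y, sub x y → rk x < rk y) (hr : ∀ a x y, r a x → sub x y → r a y) :
    {x | ∃ n, sub x (f n)}.PartiallyWellOrderedOn r := by
  rw [partiallyWellOrderedOn_iff_exists_lt]
  intro u hu
  by_contra! hu_bad
  choose idx hidx using hu
  set k₀ := Function.argmin idx
  set N := idx k₀
  let g : ℕ → α := fun n => if n < N then f n else u (k₀ + (n - N))
  refine hmin N g (fun m hm => (if_pos hm).symm) ?_ ⟨fun n => ?_, fun m n hmn => ?_⟩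
  · simpa [g] using hrk _ _ (hidx k₀)
  · by_cases hn : n < N
    · simpa [g, hn] using hbad.1 n
    · simpa [g, hn] using hs _ _ (hidx _) (hbad.1 _)
  · simp only [g]
    split_ifs with hm hn hn
    · exact hbad.2 m n hmn
    · exact fun h => hbad.2 m _ (hm.trans_le (Function.argmin_le idx _)) (hr _ _ _ h (hidx _))
    · omega
    · exact hu_bad _ _ (by omega)

end Set.PartiallyWellOrderedOn

namespace Tm
variable {σ : Type}

def label : Tm σ → σ
  | node f _ => f

def args : Tm σ → List (Tm σ)
  | node _ ts => ts

theorem sizeOf_lt_of_mem_args : ∀ {t x : Tm σ}, x ∈ t.args → sizeOf x < sizeOf t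
  | node f ts, _, h => by
    have := List.sizeOf_lt_of_mem (show _ ∈ ts from h)
    simp only [node.sizeOf_spec]
    omega

end Tm

namespace Emb
variable {σ : Type}

protected theorem refl : ∀ t : Tm σ, Emb t t
  | .node _ ts => .couple (List.forall₂_same.2 fun x _ => Emb.refl x)

protected theorem trans : ∀ {s t u : Tm σ}, Emb s t → Emb t u → Emb s u
  | _, _, .node _ _, h₁, .dive hy h₂ => .dive hy (Emb.trans h₁ h₂)
  | _, _, .node _ _, .dive hx h₁, .couple h₂ =>
    let ⟨_, hy, hxy⟩ := h₂.exists_mem_right hx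
    .dive hy (Emb.trans h₁ hxy)
  | _, _, .node _ _, .couple h₁, .couple h₂ =>
    .couple (List.Forall₂.trans_of_mem (R := Emb) (S := Emb)
      (fun _ _ _ _ hab hbc => Emb.trans hab hbc) h₁ h₂)
termination_by _ _ u => u
decreasing_by all_goals exact Tm.sizeOf_lt_of_mem_args ‹_›

instance : IsPreorder (Tm σ) Emb where
  refl := Emb.refl
  trans _ _ _ := Emb.trans

theorem of_mem_args {s x : Tm σ} : ∀ {t : Tm σ}, x ∈ t.args → Emb s x → Emb s t
  | .node _ _, hx, h => .dive hx h

end Emb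

namespace WF
variable {σ : Type} {ar : σ → ℕ}

theorem of_mem_args {t x : Tm σ} (ht : WF ar t) (hx : x ∈ t.args) : WF ar x := by
  cases ht with | node _ hargs => exact hargs x hx

theorem emb_of_sublistForall₂_args {s t : Tm σ} (hs : WF ar s) (ht : WF ar t)
    (hlabel : s.label = t.label) (hargs : List.SublistForall₂ Emb s.args t.args) : Emb s t := by
  cases hs with | node hs_len _ =>
  cases ht with | node ht_len _ =>
  cases hlabel
  exact .couple (hargs.forall₂_of_length_eq (hs_len.trans ht_len.symm))

end WF

theorem partiallyWellOrderedOn_setOf_WF {σ : Type} [Finite σ] (ar : σ → ℕ) :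
    {t : Tm σ | WF ar t}.PartiallyWellOrderedOn Emb := by
  rw [Set.PartiallyWellOrderedOn.iff_not_exists_isMinBadSeq sizeOf]
  rintro ⟨f, hbad, hmin⟩
  have hargs : {x | ∃ n, x ∈ (f n).args}.PartiallyWellOrderedOn Emb :=
    Set.PartiallyWellOrderedOn.of_isMinBadSeq hbad hmin (sub := fun x t => x ∈ t.args)
      (fun _ _ hx ht => ht.of_mem_args hx) (fun _ _ => Tm.sizeOf_lt_of_mem_args)
      (fun _ _ _ h hx => Emb.of_mem_args hx h)
  have hroots := (Set.finite_univ (α := σ)).partiallyWellOrderedOn (r := Eq) |>.prod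
    (hargs.partiallyWellOrderedOn_sublistForall₂ Emb)
  obtain ⟨m, n, hmn, hlabel, hsub⟩ :=
    hroots.exists_lt (f := fun n => ((f n).label, (f n).args))
      fun n => ⟨trivial, fun _ hx => ⟨n, hx⟩⟩
  exact hbad.2 m n hmn ((hbad.1 m).emb_of_sublistForall₂_args (hbad.1 n) hlabel hsub)

/-- Kruskal's Tree Theorem: homeomorphic embedding is a wqo on ground terms over a finite signature. -/
theorem kruskal_tree_theorem {σ : Type} [Fintype σ] (ar : σ → Nat)
    (t : ℕ → Tm σ) (hwf : ∀ n, WF ar (t n)) :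
    ∃ i j, i < j ∧ Emb (t i) (t j) :=
  (partiallyWellOrderedOn_setOf_WF ar).exists_lt hwf
end

section
/- Multiset embedding preserves well-quasi-orders: if ⊴ is a well-quasi-order on A, then the relation M ⊑ N on finite multisets over A, defined by the existence of an injection from M into N relating each element of M to its image by ⊴, is a well-quasi-order. -/
/-- Multiset embedding: `M ⊑ N` iff some sub-multiset of `N` is related to `M`
    elementwise by `r` (an injective matching of `M` into `N` along `r`). -/
def msEmb {A : Type} (r : A → A → Prop) (M N : Multiset A) : Prop :=
  ∃ N' ≤ N, Multiset.Rel r M N'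

/-!
Forgetting the order of a list turns Higman's subword embedding `List.SublistForall₂ r`
into multiset embedding, and every multiset is the image of a list. Hence the multiset
embedding is the image of a well-quasi-order under a surjective relation homomorphism,
and so is itself a well-quasi-order.
-/

section msEmb

variable {A : Type} {r : A → A → Prop}

theorem msEmb_refl (hr : Reflexive r) : Reflexive (msEmb r) :=
  fun M ↦ ⟨M, le_rfl, Multiset.rel_refl_of_refl_on fun a _ ↦ hr a⟩

theorem msEmb_trans [IsTrans A r] : Transitive (msEmb r) := by
  rintro L M N ⟨M', hM'M, hLM'⟩ ⟨N', hN'N, hMN'⟩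
  obtain ⟨K, rfl⟩ := Multiset.le_iff_exists_add.mp hM'M
  obtain ⟨N₁, N₂, hM'N₁, -, rfl⟩ := Multiset.rel_add_left.mp hMN'
  exact ⟨N₁, (Multiset.le_add_right _ _).trans hN'N, hLM'.trans r hM'N₁⟩

theorem msEmb_coe_of_sublistForall₂ {l₁ l₂ : List A} (h : List.SublistForall₂ r l₁ l₂) :
    msEmb r l₁ l₂ := by
  induction h with
  | nil => exact ⟨0, Multiset.zero_le _, Multiset.Rel.zero⟩
  | cons hab _ ih =>
    obtain ⟨N', hN', hrel⟩ := ih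
    exact ⟨_, Multiset.cons_le_cons _ hN', hrel.cons hab⟩
  | cons_right _ ih =>
    obtain ⟨N', hN', hrel⟩ := ih
    exact ⟨N', hN'.trans (Multiset.le_cons_self _ _), hrel⟩

theorem WellQuasiOrdered.sublistForall₂ [IsPreorder A r] (h : WellQuasiOrdered r) :
    WellQuasiOrdered (List.SublistForall₂ r) := by
  have higman := (Set.partiallyWellOrderedOn_univ_iff.mpr h)
    |>.partiallyWellOrderedOn_sublistForall₂ r
  exact fun f ↦ higman.exists_lt fun n x _ ↦ Set.mem_univ x

theorem WellQuasiOrdered.msEmb [IsPreorder A r] (h : WellQuasiOrdered r) :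
    WellQuasiOrdered (msEmb r) :=
  h.sublistForall₂.of_surjective ⟨((↑) : List A → Multiset A), msEmb_coe_of_sublistForall₂⟩
    Quot.mk_surjective

end msEmb

/-- Multiset embedding preserves well-quasi-orders. -/
theorem msEmb_wqo {A : Type} (r : A → A → Prop)
    (hrefl : Reflexive r) (htrans : Transitive r)
    (hwqo : ∀ f : ℕ → A, ∃ i j, i < j ∧ r (f i) (f j)) :
    Reflexive (msEmb r) ∧ Transitive (msEmb r) ∧
      ∀ f : ℕ → Multiset A, ∃ i j, i < j ∧ msEmb r (f i) (f j) := by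
  have : IsPreorder A r := { refl := hrefl, trans := htrans }
  exact ⟨msEmb_refl hrefl, msEmb_trans, WellQuasiOrdered.msEmb hwqo⟩
end
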